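/- A pair (a,c) with a < c is a tree-ascent of an s-decreasing tree T if and only if: (i) card(d,c) = card(d,a) for all d > c; (ii) card(c,a) < s(c); (iii) for all b with a < b < c, card(c,b) = card(c,a) implies card(b,a) = s(b); (iv) if s(a) > 0, then for all a' < a, card(a,a') = s(a) implies card(c,a') > card(c,a). -/

import Mathlib

/-- Planar rooted trees: leaves are unlabeled; internal nodes carry a natural
number label and an ordered list of children. -/
inductive STree : Type where
  | leaf : STree
  | node : ℕ → List STree → STree

namespace STree

mutual
  /-- `x` occurs as the label of an internal node of the tree. -/
  def mem (x : ℕ) : STree → Bool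
    | .leaf => false
    | .node a cs => x == a || memL x cs
  def memL (x : ℕ) : List STree → Bool
    | [] => false
    | t :: ts => mem x t || memL x ts
end

mutual
  /-- The list of internal node labels, in preorder. -/
  def labels : STree → List ℕ
    | .leaf => []
    | .node a cs => a :: labelsL cs
  def labelsL : List STree → List ℕ
    | [] => []
    | t :: ts => labels t ++ labelsL ts
end

mutual
  /-- Local well-formedness for the signature `s` : an internal node labeled `a`
  has `s a + 1` children, and all labels below it are smaller than `a`. -/
  def wf (s : ℕ → ℕ) : STree → Prop
    | .leaf => True
    | .node a cs => cs.length = s a + 1 ∧ (∀ b ∈ labelsL cs, b < a) ∧ wfL s cs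
  def wfL (s : ℕ → ℕ) : List STree → Prop
    | [] => True
    | t :: ts => wf s t ∧ wfL s ts
end

/-- `T` is an `s`-decreasing tree: its internal nodes are labeled bijectively by
`1, …, n`, node `i` has `s i + 1` ordered children, and all descendants of a node
have smaller labels. -/
def IsSDecreasingTree (n : ℕ) (s : ℕ → ℕ) (T : STree) : Prop :=
  wf s T ∧ (labels T).Perm (List.range' 1 n)

/-- Index of the first tree of the list containing the label `x`. -/
def idxOf (x : ℕ) : List STree → ℕ
  | [] => 0
  | t :: ts => if mem x t then 0 else idxOf x ts + 1

mutual
  /-- The cardinality `card_T(y,x)` of the pair `(y,x)` in the tree: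
  `0` if `x` is (weakly) left of `y`, `i` if `x` lies in the `i`-th child
  subtree of `y`, and `s y` if `x` is right of `y`. -/
  def card (s : ℕ → ℕ) (y x : ℕ) : STree → ℕ
    | .leaf => 0
    | .node a cs => if a = y then idxOf x cs else cardL s y x cs
  def cardL (s : ℕ → ℕ) (y x : ℕ) : List STree → ℕ
    | [] => 0
    | t :: ts =>
      if mem y t then
        (if mem x t then card s y x t else if memL x ts then s y else 0)
      else (if mem x t then 0 else cardL s y x ts)
end

/-- The tree-inversion multiset of `T`, as a multiplicity function on pairs
`(y,x)` with `1 ≤ x < y ≤ n`. -/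
def treeInv (n : ℕ) (s : ℕ → ℕ) (T : STree) : ℕ → ℕ → ℕ := fun y x =>
  if 1 ≤ x ∧ x < y ∧ y ≤ n then card s y x T else 0

/-- A multi inversion set on `1, …, n` bounded by the weak composition `s`. -/
def IsMultiInvSet (n : ℕ) (s : ℕ → ℕ) (I : ℕ → ℕ → ℕ) : Prop :=
  (∀ y x, I y x ≤ s y) ∧ ∀ y x, ¬(1 ≤ x ∧ x < y ∧ y ≤ n) → I y x = 0

/-- Transitivity: for `a < b < c`, `card(c,b) = i` implies `card(b,a) = 0` or
`card(c,a) ≥ i`. -/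
def InvTransitive (I : ℕ → ℕ → ℕ) : Prop :=
  ∀ a b c : ℕ, a < b → b < c → I b a = 0 ∨ I c b ≤ I c a

/-- Planarity: for `a < b < c`, `card(c,a) = i` implies `card(b,a) = s b` or
`card(c,b) ≥ i`. -/
def InvPlanar (s : ℕ → ℕ) (I : ℕ → ℕ → ℕ) : Prop :=
  ∀ a b c : ℕ, a < b → b < c → I b a = s b ∨ I c a ≤ I c b

/-- An `s`-tree-inversion set: a bounded multi inversion set that is transitive
and planar. -/
def IsTreeInvSet (n : ℕ) (s : ℕ → ℕ) (I : ℕ → ℕ → ℕ) : Prop :=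
  IsMultiInvSet n s I ∧ InvTransitive I ∧ InvPlanar s I

/-- Inclusion of multi inversion sets: pointwise comparison of multiplicities. -/
def invLE (I J : ℕ → ℕ → ℕ) : Prop := ∀ y x, I y x ≤ J y x

/-- The `s`-weak order: inclusion of tree-inversion multisets. -/
def sWeakLE (n : ℕ) (s : ℕ → ℕ) (T R : STree) : Prop :=
  invLE (treeInv n s T) (treeInv n s R)

/-- Union of multi inversion sets: pointwise maximum. -/
def invUnion (I J : ℕ → ℕ → ℕ) : ℕ → ℕ → ℕ := fun y x => max (I y x) (J y x)

/-- Transitive closure: `tc I (c,a)` is the maximal value of `I (b₁, b₂)` over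
all transitivity paths `c = b₁ > b₂ > … > b_k = a` (consecutive entries have
positive multiplicity). -/
noncomputable def tc (I : ℕ → ℕ → ℕ) : ℕ → ℕ → ℕ := fun c a =>
  sSup {v | ∃ (b : ℕ) (l : List ℕ),
    List.Chain (fun u w => w < u ∧ 0 < I u w) c (b :: l) ∧
    (b :: l).getLast (List.cons_ne_nil b l) = a ∧ v = I c b}

/-- Adding the inversion `(c,a)`: increase its multiplicity by one. -/
def addInv (I : ℕ → ℕ → ℕ) (c a : ℕ) : ℕ → ℕ → ℕ := fun y x =>
  if y = c ∧ x = a then I y x + 1 else I y x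

mutual
  /-- `a` is a (proper) descendant of the node labeled `c`. -/
  def descIn (c a : ℕ) : STree → Bool
    | .leaf => false
    | .node b cs => (b == c && memL a cs) || descInL c a cs
  def descInL (c a : ℕ) : List STree → Bool
    | [] => false
    | t :: ts => descIn c a t || descInL c a ts
end

mutual
  /-- `a` belongs to the rightmost child subtree of the node labeled `c`. -/
  def inRight (c a : ℕ) : STree → Bool
    | .leaf => false
    | .node b cs =>
      (b == c && (match cs.getLast? with
        | some t => mem a t
        | none => false)) || inRightL c a cs
  def inRightL (c a : ℕ) : List STree → Bool
    | [] => false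
    | t :: ts => inRight c a t || inRightL c a ts
end

mutual
  /-- `a` belongs to the leftmost child subtree of the node labeled `c`. -/
  def inLeft (c a : ℕ) : STree → Bool
    | .leaf => false
    | .node b cs =>
      (b == c && (match cs.head? with
        | some t => mem a t
        | none => false)) || inLeftL c a cs
  def inLeftL (c a : ℕ) : List STree → Bool
    | [] => false
    | t :: ts => inLeft c a t || inLeftL c a ts
end

mutual
  /-- The rightmost child subtree of the node labeled `a` is empty (a leaf). -/
  def rightEmpty (a : ℕ) : STree → Bool
    | .leaf => false
    | .node b cs =>
      (b == a && (match cs.getLast? with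
        | some .leaf => true
        | _ => false)) || rightEmptyL a cs
  def rightEmptyL (a : ℕ) : List STree → Bool
    | [] => false
    | t :: ts => rightEmpty a t || rightEmptyL a ts
end

/-- `(a,c)` is a tree-ascent of `T`: `a` is a descendant of `c`, not in the
rightmost subtree of `c`; `a` lies in the rightmost subtree of any `b` with
`a < b < c` having `a` as a descendant; and if `s a > 0` the rightmost
(strict right) subtree of `a` is empty. -/
def IsTreeAscent (s : ℕ → ℕ) (T : STree) (a c : ℕ) : Prop :=
  a < c ∧ descIn c a T = true ∧ inRight c a T = false ∧
  (∀ b : ℕ, a < b → b < c → descIn b a T = true → inRight b a T = true) ∧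
  (0 < s a → rightEmpty a T = true)

/-- `a` is the root label of the tree. -/
def hasRoot (a : ℕ) : STree → Bool
  | .leaf => false
  | .node b _ => a == b

mutual
  /-- `a` is a direct child of the node `c`, but not its rightmost child. -/
  def nonRightChild (c a : ℕ) : STree → Bool
    | .leaf => false
    | .node b cs => (b == c && cs.dropLast.any (hasRoot a)) || nonRightChildL c a cs
  def nonRightChildL (c a : ℕ) : List STree → Bool
    | [] => false
    | t :: ts => nonRightChild c a t || nonRightChildL c a ts
end

/-- `(a,c)` is a Tamari-ascent of `T`: `a` is a non-right child of `c`. -/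
def IsTamariAscent (T : STree) (a c : ℕ) : Prop :=
  a < c ∧ nonRightChild c a T = true

mutual
  /-- Horizontal mirror image of a tree: the order of children is reversed at
  every internal node. -/
  def mirror : STree → STree
    | .leaf => .leaf
    | .node a cs => .node a (mirrorL cs)
  def mirrorL : List STree → List STree
    | [] => []
    | t :: ts => mirrorL ts ++ [mirror t]
end

/-- `T` is an `s`-Tamari tree: `card(c,a) ≤ card(c,b)` for all `a < b < c`. -/
def TamariProp (n : ℕ) (s : ℕ → ℕ) (T : STree) : Prop :=
  ∀ a b c : ℕ, a < b → b < c → treeInv n s T c a ≤ treeInv n s T c b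

/-- `T` is an `s`-maximal-Tamari tree: `card(b,a) = s b` implies
`card(c,a) = s c` for all `c > b`. -/
def MaxTamariProp (n : ℕ) (s : ℕ → ℕ) (T : STree) : Prop :=
  ∀ a b c : ℕ, 1 ≤ a → a < b → b < c → c ≤ n →
    treeInv n s T b a = s b → treeInv n s T c a = s c

/-- The projection `π↓` on inversion sets:
`card_Q(c,a) = min { card_T(c,b) : a ≤ b < c }`. -/
noncomputable def pidownInv (n : ℕ) (s : ℕ → ℕ) (T : STree) : ℕ → ℕ → ℕ :=
  fun c a => sInf {v | ∃ b : ℕ, a ≤ b ∧ b < c ∧ v = treeInv n s T c b}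

open scoped Classical in
/-- The projection `π↑` on inversion sets: `card_R(c,a) = s c` if there is
`a < b < c` with `card_T(b,a) = s b`, and `card_R(c,a) = card_T(c,a)` otherwise. -/
noncomputable def piupInv (n : ℕ) (s : ℕ → ℕ) (T : STree) : ℕ → ℕ → ℕ :=
  fun c a =>
    if 1 ≤ a ∧ a < c ∧ c ≤ n then
      if ∃ b : ℕ, a < b ∧ b < c ∧ treeInv n s T b a = s b then s c
      else treeInv n s T c a
    else 0

end STree

/-! In an `s`-decreasing tree, `card s y x` only records in which child subtree of `y` the
node `x` lies, or whether `x` lies left or right of `y`. Hence nodes below `c` look like `c`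
to every ancestor of `c` (condition (i)), and `card s c a = s c` exactly when `a` lies in the
rightmost subtree of `c` (condition (ii), and (iii) for `b` on the path from `a` to `c`).
Two incomparable nodes `x`, `y` are separated at their meet `m`: if `x` lies in an earlier
child of `m` than `y`, then `card s y x = 0` and `card s x y = s x`. For `b` or `a'` off the
path, (iii) and (iv) follow by locating the meet `m` with `a`: it is `c`, an ancestor of `c`,
or a node strictly between `a` and `c`, where the ascent condition forces
`card s m a = s m`. -/

namespace STree

variable {n : ℕ} {s : ℕ → ℕ} {T : STree}

mutual
theorem mem_iff_mem_labels (x : ℕ) : ∀ t : STree, mem x t = true ↔ x ∈ labels t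
  | .leaf => by simp [mem, labels]
  | .node a cs => by simp [mem, labels, memL_iff_mem_labelsL x cs]
theorem memL_iff_mem_labelsL (x : ℕ) : ∀ cs : List STree, memL x cs = true ↔ x ∈ labelsL cs
  | [] => by simp [memL, labelsL]
  | t :: ts => by simp [memL, labelsL, memL_iff_mem_labelsL x ts, mem_iff_mem_labels x t]
end

theorem memL_of_mem {x : ℕ} {t : STree} {cs : List STree} (ht : t ∈ cs)
    (hx : mem x t = true) : memL x cs = true := by
  rw [memL_iff_mem_labelsL]
  rw [mem_iff_mem_labels] at hx
  induction cs with
  | nil => cases ht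
  | cons t' ts ih =>
    rcases List.mem_cons.1 ht with rfl | ht
    · exact List.mem_append_left _ hx
    · exact List.mem_append_right _ (ih ht)

section Nodup

variable {b x : ℕ} {cs : List STree} {t : STree} {ts : List STree}

theorem memL_eq_false_of_nodup_node (hnd : (labels (node b cs)).Nodup) :
    memL b cs = false := by
  rw [← Bool.not_eq_true, memL_iff_mem_labelsL]
  exact (List.nodup_cons.1 hnd).1

theorem memL_eq_false_of_mem (hnd : (labelsL (t :: ts)).Nodup) (hx : mem x t = true) :
    memL x ts = false := by
  rw [← Bool.not_eq_true, memL_iff_mem_labelsL]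
  exact List.disjoint_of_nodup_append hnd ((mem_iff_mem_labels x t).1 hx)

theorem mem_eq_false_of_memL (hnd : (labelsL (t :: ts)).Nodup) (hx : memL x ts = true) :
    mem x t = false := by
  rw [← Bool.not_eq_true, mem_iff_mem_labels]
  exact fun h => List.disjoint_of_nodup_append hnd h ((memL_iff_mem_labelsL x ts).1 hx)

theorem nodup_labels_of_cons (hnd : (labelsL (t :: ts)).Nodup) : (labels t).Nodup :=
  hnd.of_append_left

theorem nodup_labelsL_of_cons (hnd : (labelsL (t :: ts)).Nodup) : (labelsL ts).Nodup :=
  hnd.of_append_right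

end Nodup

mutual
theorem descIn_mem {c a : ℕ} : ∀ {t : STree}, descIn c a t = true →
    mem c t = true ∧ mem a t = true
  | .leaf, h => by simp [descIn] at h
  | .node b cs, h => by
    simp only [descIn, Bool.or_eq_true, Bool.and_eq_true, beq_iff_eq] at h
    rcases h with ⟨rfl, h⟩ | h
    · simp [mem, h]
    · simp [mem, descInL_mem h]
theorem descInL_mem {c a : ℕ} : ∀ {cs : List STree}, descInL c a cs = true →
    memL c cs = true ∧ memL a cs = true
  | [], h => by simp [descInL] at h
  | t :: ts, h => by
    simp only [descInL, Bool.or_eq_true] at h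
    rcases h with h | h
    · simp [memL, descIn_mem h]
    · simp [memL, descInL_mem h]
end

mutual
theorem inRight_mem {c a : ℕ} : ∀ {t : STree}, inRight c a t = true → mem c t = true
  | .leaf, h => by simp [inRight] at h
  | .node b cs, h => by
    simp only [inRight, Bool.or_eq_true, Bool.and_eq_true, beq_iff_eq] at h
    rcases h with ⟨rfl, -⟩ | h
    · simp [mem]
    · simp [mem, inRightL_mem h]
theorem inRightL_mem {c a : ℕ} : ∀ {cs : List STree}, inRightL c a cs = true →
    memL c cs = true
  | [], h => by simp [inRightL] at h
  | t :: ts, h => by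
    simp only [inRightL, Bool.or_eq_true] at h
    rcases h with h | h
    · simp [memL, inRight_mem h]
    · simp [memL, inRightL_mem h]
end

mutual
theorem rightEmpty_mem {a : ℕ} : ∀ {t : STree}, rightEmpty a t = true → mem a t = true
  | .leaf, h => by simp [rightEmpty] at h
  | .node b cs, h => by
    simp only [rightEmpty, Bool.or_eq_true, Bool.and_eq_true, beq_iff_eq] at h
    rcases h with ⟨rfl, -⟩ | h
    · simp [mem]
    · simp [mem, rightEmptyL_mem h]
theorem rightEmptyL_mem {a : ℕ} : ∀ {cs : List STree}, rightEmptyL a cs = true →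
    memL a cs = true
  | [], h => by simp [rightEmptyL] at h
  | t :: ts, h => by
    simp only [rightEmptyL, Bool.or_eq_true] at h
    rcases h with h | h
    · simp [memL, rightEmpty_mem h]
    · simp [memL, rightEmptyL_mem h]
end

mutual
theorem lt_of_descIn {c a : ℕ} : ∀ {t : STree}, wf s t → descIn c a t = true → a < c
  | .leaf, _, h => by simp [descIn] at h
  | .node b cs, hw, h => by
    simp only [descIn, Bool.or_eq_true, Bool.and_eq_true, beq_iff_eq] at h
    rcases h with ⟨rfl, h⟩ | h
    · exact hw.2.1 a ((memL_iff_mem_labelsL a cs).1 h)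
    · exact lt_of_descInL hw.2.2 h
theorem lt_of_descInL {c a : ℕ} : ∀ {cs : List STree}, wfL s cs → descInL c a cs = true →
    a < c
  | [], _, h => by simp [descInL] at h
  | t :: ts, hw, h => by
    simp only [descInL, Bool.or_eq_true] at h
    rcases h with h | h
    · exact lt_of_descIn hw.1 h
    · exact lt_of_descInL hw.2 h
end

mutual
theorem card_eq_zero_of_mem_eq_false {d x : ℕ} : ∀ {t : STree}, mem d t = false →
    card s d x t = 0
  | .leaf, _ => rfl
  | .node b cs, h => by
    simp only [mem, Bool.or_eq_false_iff, beq_eq_false_iff_ne] at h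
    rw [card, if_neg (Ne.symm h.1)]
    exact cardL_eq_zero_of_memL_eq_false h.2
theorem cardL_eq_zero_of_memL_eq_false {d x : ℕ} : ∀ {cs : List STree}, memL d cs = false →
    cardL s d x cs = 0
  | [], _ => rfl
  | t :: ts, h => by
    simp only [memL, Bool.or_eq_false_iff] at h
    simp only [cardL, h.1, Bool.false_eq_true, if_false]
    split
    · rfl
    · exact cardL_eq_zero_of_memL_eq_false h.2
end

theorem idxOf_lt_length {x : ℕ} : ∀ {cs : List STree}, memL x cs = true →
    idxOf x cs < cs.length
  | [], h => by simp [memL] at h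
  | t :: ts, h => by
    simp only [memL, Bool.or_eq_true] at h
    by_cases hxt : mem x t = true
    · simp [idxOf, hxt]
    · have := idxOf_lt_length (h.resolve_left hxt)
      simp only [idxOf, if_neg hxt, List.length_cons]
      omega

theorem idxOf_add_one_eq_length_iff {x : ℕ} : ∀ {cs : List STree} (hcs : cs ≠ []),
    (labelsL cs).Nodup → memL x cs = true →
    (idxOf x cs + 1 = cs.length ↔ mem x (cs.getLast hcs) = true)
  | [t], _, _, h => by simp_all [idxOf, memL]
  | t :: t' :: ts, _, hnd, h => by
    rw [List.getLast_cons (List.cons_ne_nil t' ts)]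
    by_cases hxt : mem x t = true
    · have hlast : mem x ((t' :: ts).getLast (List.cons_ne_nil t' ts)) = false := by
        rw [← Bool.not_eq_true]
        intro hx
        have := memL_of_mem (List.getLast_mem _) hx
        simp [memL_eq_false_of_mem hnd hxt] at this
      simp [idxOf, hxt, hlast]
    · simp only [memL, hxt, Bool.false_or] at h
      rw [idxOf, if_neg hxt, List.length_cons, Nat.add_right_cancel_iff]
      exact idxOf_add_one_eq_length_iff _ (nodup_labelsL_of_cons hnd) h

theorem idxOf_eq_of_descInL {y x : ℕ} : ∀ {cs : List STree}, (labelsL cs).Nodup →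
    descInL y x cs = true → idxOf x cs = idxOf y cs
  | [], _, h => by simp [descInL] at h
  | t :: ts, hnd, h => by
    simp only [descInL, Bool.or_eq_true] at h
    rcases h with h | h
    · simp [idxOf, descIn_mem h]
    · obtain ⟨hy, hx⟩ := descInL_mem h
      simp [idxOf, mem_eq_false_of_memL hnd hx, mem_eq_false_of_memL hnd hy,
        idxOf_eq_of_descInL (nodup_labelsL_of_cons hnd) h]

mutual
theorem card_eq_card_of_descIn {y x d : ℕ} : ∀ {t : STree}, (labels t).Nodup → wf s t →
    descIn y x t = true → y < d → card s d x t = card s d y t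
  | .leaf, _, _, h, _ => by simp [descIn] at h
  | .node b cs, hnd, hw, h, hyd => by
    have hndc : (labelsL cs).Nodup := (List.nodup_cons.1 hnd).2
    simp only [descIn, Bool.or_eq_true, Bool.and_eq_true, beq_iff_eq] at h
    rcases h with ⟨rfl, -⟩ | h
    · have hdcs : memL d cs = false := by
        rw [← Bool.not_eq_true, memL_iff_mem_labelsL]
        exact fun hd => absurd (hw.2.1 d hd) (by omega)
      simp only [card, if_neg (Nat.ne_of_lt hyd),
        cardL_eq_zero_of_memL_eq_false hdcs]
    · simp only [card]
      split
      · exact idxOf_eq_of_descInL hndc h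
      · exact cardL_eq_cardL_of_descInL hndc hw.2.2 h hyd
theorem cardL_eq_cardL_of_descInL {y x d : ℕ} : ∀ {cs : List STree}, (labelsL cs).Nodup →
    wfL s cs → descInL y x cs = true → y < d → cardL s d x cs = cardL s d y cs
  | [], _, _, h, _ => by simp [descInL] at h
  | t :: ts, hnd, hw, h, hyd => by
    simp only [descInL, Bool.or_eq_true] at h
    rcases h with h | h
    · obtain ⟨hy, hx⟩ := descIn_mem h
      simp only [cardL, hx, hy, if_true]
      split
      · exact card_eq_card_of_descIn (nodup_labels_of_cons hnd) hw.1 h hyd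
      · rfl
    · obtain ⟨hy, hx⟩ := descInL_mem h
      simp only [cardL, mem_eq_false_of_memL hnd hx, mem_eq_false_of_memL hnd hy, hx, hy,
        Bool.false_eq_true, if_false, if_true]
      split
      · rfl
      · exact cardL_eq_cardL_of_descInL (nodup_labelsL_of_cons hnd) hw.2 h hyd
end

mutual
theorem card_le_and_inRight_iff {c a : ℕ} : ∀ {t : STree}, (labels t).Nodup → wf s t →
    descIn c a t = true → card s c a t ≤ s c ∧ (inRight c a t = true ↔ card s c a t = s c)
  | .leaf, _, _, h => by simp [descIn] at h
  | .node b cs, hnd, hw, h => by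
    obtain ⟨hlen, -, hwL⟩ := hw
    have hndc : (labelsL cs).Nodup := (List.nodup_cons.1 hnd).2
    have hbcs := memL_eq_false_of_nodup_node hnd
    simp only [descIn, Bool.or_eq_true, Bool.and_eq_true, beq_iff_eq] at h
    rcases h with ⟨rfl, h⟩ | h
    · have hcs : cs ≠ [] := List.ne_nil_of_length_pos (by omega)
      have hright : inRightL b a cs = false := by
        rw [← Bool.not_eq_true]
        exact fun hr => absurd (inRightL_mem hr) (by simp [hbcs])
      have hidx := idxOf_add_one_eq_length_iff hcs hndc h
      have := idxOf_lt_length h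
      simp only [card, inRight, if_true, beq_self_eq_true, Bool.true_and,
        List.getLast?_eq_some_getLast hcs, hright, Bool.or_false, ← hidx]
      omega
    · have hbc : b ≠ c := by
        rintro rfl
        simp [(descInL_mem h).1] at hbcs
      simpa only [card, inRight, if_neg hbc, beq_eq_false_iff_ne.2 hbc, Bool.false_and,
        Bool.false_or] using cardL_le_and_inRightL_iff hndc hwL h
theorem cardL_le_and_inRightL_iff {c a : ℕ} : ∀ {cs : List STree}, (labelsL cs).Nodup →
    wfL s cs → descInL c a cs = true →
    cardL s c a cs ≤ s c ∧ (inRightL c a cs = true ↔ cardL s c a cs = s c)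
  | [], _, _, h => by simp [descInL] at h
  | t :: ts, hnd, hw, h => by
    simp only [descInL, Bool.or_eq_true] at h
    rcases h with h | h
    · obtain ⟨hc, ha⟩ := descIn_mem h
      have hts : inRightL c a ts = false := by
        rw [← Bool.not_eq_true]
        exact fun hr => absurd (inRightL_mem hr) (by simp [memL_eq_false_of_mem hnd hc])
      simpa only [cardL, inRightL, hc, ha, hts, if_true, Bool.or_false]
        using card_le_and_inRight_iff (nodup_labels_of_cons hnd) hw.1 h
    · obtain ⟨hc, ha⟩ := descInL_mem h
      have hct := mem_eq_false_of_memL hnd hc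
      have ht : inRight c a t = false := by
        rw [← Bool.not_eq_true]
        exact fun hr => absurd (inRight_mem hr) (by simp [hct])
      simpa only [cardL, inRightL, hct, mem_eq_false_of_memL hnd ha, ht, Bool.false_eq_true,
        if_false, Bool.false_or] using cardL_le_and_inRightL_iff (nodup_labelsL_of_cons hnd) hw.2 h
end

mutual
theorem descIn_comparable {p q x : ℕ} : ∀ {t : STree}, (labels t).Nodup →
    descIn p x t = true → descIn q x t = true →
    p = q ∨ descIn p q t = true ∨ descIn q p t = true
  | .leaf, _, h, _ => by simp [descIn] at h
  | .node b cs, hnd, hp, hq => by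
    simp only [descIn, Bool.or_eq_true, Bool.and_eq_true, beq_iff_eq] at hp hq ⊢
    rcases hp with ⟨rfl, -⟩ | hp <;> rcases hq with ⟨rfl, -⟩ | hq
    · exact Or.inl rfl
    · exact Or.inr (Or.inl (Or.inl ⟨rfl, (descInL_mem hq).1⟩))
    · exact Or.inr (Or.inr (Or.inl ⟨rfl, (descInL_mem hp).1⟩))
    · rcases descInL_comparable (List.nodup_cons.1 hnd).2 hp hq with h | h | h
      · exact Or.inl h
      · exact Or.inr (Or.inl (Or.inr h))
      · exact Or.inr (Or.inr (Or.inr h))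
theorem descInL_comparable {p q x : ℕ} : ∀ {cs : List STree}, (labelsL cs).Nodup →
    descInL p x cs = true → descInL q x cs = true →
    p = q ∨ descInL p q cs = true ∨ descInL q p cs = true
  | [], _, h, _ => by simp [descInL] at h
  | t :: ts, hnd, hp, hq => by
    simp only [descInL, Bool.or_eq_true] at hp hq ⊢
    rcases hp with hp | hp <;> rcases hq with hq | hq
    · rcases descIn_comparable (nodup_labels_of_cons hnd) hp hq with h | h | h
      · exact Or.inl h
      · exact Or.inr (Or.inl (Or.inl h))
      · exact Or.inr (Or.inr (Or.inl h))
    · exact absurd (descInL_mem hq).2 (by simp [memL_eq_false_of_mem hnd (descIn_mem hp).2])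
    · exact absurd (descInL_mem hp).2 (by simp [memL_eq_false_of_mem hnd (descIn_mem hq).2])
    · rcases descInL_comparable (nodup_labelsL_of_cons hnd) hp hq with h | h | h
      · exact Or.inl h
      · exact Or.inr (Or.inl (Or.inr h))
      · exact Or.inr (Or.inr (Or.inr h))
end

mutual
theorem inRight_eq_false_of_rightEmpty {a x : ℕ} : ∀ {t : STree}, (labels t).Nodup →
    rightEmpty a t = true → inRight a x t = false
  | .leaf, _, _ => rfl
  | .node b cs, hnd, h => by
    have hbcs := memL_eq_false_of_nodup_node hnd
    simp only [rightEmpty, Bool.or_eq_true, Bool.and_eq_true, beq_iff_eq] at h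
    rcases h with ⟨rfl, hleaf⟩ | h
    · have hright : inRightL b x cs = false := by
        rw [← Bool.not_eq_true]
        exact fun hr => absurd (inRightL_mem hr) (by simp [hbcs])
      simp only [inRight, beq_self_eq_true, Bool.true_and, hright, Bool.or_false]
      rcases hl : cs.getLast? with _ | _ | _ <;> simp_all [mem]
    · have hba : b ≠ a := by
        rintro rfl
        simp [rightEmptyL_mem h] at hbcs
      simp [inRight, hba, inRightL_eq_false_of_rightEmptyL (List.nodup_cons.1 hnd).2 h]
theorem inRightL_eq_false_of_rightEmptyL {a x : ℕ} : ∀ {cs : List STree},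
    (labelsL cs).Nodup → rightEmptyL a cs = true → inRightL a x cs = false
  | [], _, _ => rfl
  | t :: ts, hnd, h => by
    simp only [rightEmptyL, Bool.or_eq_true] at h
    rcases h with h | h
    · have hts : inRightL a x ts = false := by
        rw [← Bool.not_eq_true]
        exact fun hr => absurd (inRightL_mem hr)
          (by simp [memL_eq_false_of_mem hnd (rightEmpty_mem h)])
      simp [inRightL, inRight_eq_false_of_rightEmpty (nodup_labels_of_cons hnd) h, hts]
    · have ht : inRight a x t = false := by
        rw [← Bool.not_eq_true]
        exact fun hr => absurd (inRight_mem hr)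
          (by simp [mem_eq_false_of_memL hnd (rightEmptyL_mem h)])
      simp [inRightL, ht, inRightL_eq_false_of_rightEmptyL (nodup_labelsL_of_cons hnd) h]
end

mutual
theorem exists_inRight_of_rightEmpty_eq_false {a : ℕ} : ∀ {t : STree}, wf s t →
    mem a t = true → rightEmpty a t = false →
    ∃ x, descIn a x t = true ∧ inRight a x t = true
  | .leaf, _, h, _ => by simp [mem] at h
  | .node b cs, ⟨hlen, _, hwL⟩, hm, hre => by
    simp only [rightEmpty, Bool.or_eq_false_iff, Bool.and_eq_false_iff, beq_eq_false_iff_ne]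
      at hre
    by_cases hba : b = a
    · subst hba
      have hcs : cs ≠ [] := List.ne_nil_of_length_pos (by omega)
      have hlast := List.getLast?_eq_some_getLast hcs
      cases ht : cs.getLast hcs with
      | leaf => simp [hlast, ht] at hre
      | node r cs' =>
        have hr : mem r (cs.getLast hcs) = true := by simp [ht, mem]
        exact ⟨r, by simp [descIn, memL_of_mem (List.getLast_mem hcs) hr],
          by simp [inRight, hlast, hr]⟩
    · have hmcs : memL a cs = true := by simpa [mem, Ne.symm hba] using hm
      obtain ⟨x, hd, hr⟩ := exists_inRightL_of_rightEmptyL_eq_false hwL hmcs hre.2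
      exact ⟨x, by simp [descIn, hd], by simp [inRight, hr]⟩
theorem exists_inRightL_of_rightEmptyL_eq_false {a : ℕ} : ∀ {cs : List STree}, wfL s cs →
    memL a cs = true → rightEmptyL a cs = false →
    ∃ x, descInL a x cs = true ∧ inRightL a x cs = true
  | [], _, h, _ => by simp [memL] at h
  | t :: ts, hw, hm, hre => by
    simp only [rightEmptyL, Bool.or_eq_false_iff] at hre
    simp only [memL, Bool.or_eq_true] at hm
    rcases hm with hm | hm
    · obtain ⟨x, hd, hr⟩ := exists_inRight_of_rightEmpty_eq_false hw.1 hm hre.1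
      exact ⟨x, by simp [descInL, hd], by simp [inRightL, hr]⟩
    · obtain ⟨x, hd, hr⟩ := exists_inRightL_of_rightEmptyL_eq_false hw.2 hm hre.2
      exact ⟨x, by simp [descInL, hd], by simp [inRightL, hr]⟩
end

mutual
theorem exists_meet {x y : ℕ} : ∀ {t : STree}, (labels t).Nodup →
    mem x t = true → mem y t = true → x ≠ y → descIn x y t = false → descIn y x t = false →
    ∃ m, descIn m x t = true ∧ descIn m y t = true ∧ card s m x t ≠ card s m y t
  | .leaf, _, hx, _, _, _, _ => by simp [mem] at hx
  | .node b cs, hnd, hx, hy, hxy, hdxy, hdyx => by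
    simp only [mem, Bool.or_eq_true, beq_iff_eq] at hx hy
    simp only [descIn, Bool.or_eq_false_iff, Bool.and_eq_false_iff, beq_eq_false_iff_ne]
      at hdxy hdyx
    have hxcs : memL x cs = true := by
      rcases hx with rfl | hx
      · rcases hy with rfl | hy
        · exact absurd rfl hxy
        · simp_all
      · exact hx
    have hycs : memL y cs = true := by
      rcases hy with rfl | hy
      · simp_all
      · exact hy
    rcases exists_meetL (List.nodup_cons.1 hnd).2 hxcs hycs hxy hdxy.2 hdyx.2 with
      ⟨m, hmx, hmy, hne⟩ | hne
    · have hbm : b ≠ m := by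
        rintro rfl
        simpa [memL_eq_false_of_nodup_node hnd] using (descInL_mem hmx).1
      exact ⟨m, by simp [descIn, hmx], by simp [descIn, hmy], by simpa [card, hbm] using hne⟩
    · exact ⟨b, by simp [descIn, hxcs], by simp [descIn, hycs], by simpa [card] using hne⟩
theorem exists_meetL {x y : ℕ} : ∀ {cs : List STree}, (labelsL cs).Nodup →
    memL x cs = true → memL y cs = true → x ≠ y →
    descInL x y cs = false → descInL y x cs = false →
    (∃ m, descInL m x cs = true ∧ descInL m y cs = true ∧ cardL s m x cs ≠ cardL s m y cs) ∨
      idxOf x cs ≠ idxOf y cs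
  | [], _, hx, _, _, _, _ => by simp [memL] at hx
  | t :: ts, hnd, hx, hy, hxy, hdxy, hdyx => by
    simp only [descInL, Bool.or_eq_false_iff] at hdxy hdyx
    by_cases hxt : mem x t = true <;> by_cases hyt : mem y t = true
    · obtain ⟨m, hmx, hmy, hne⟩ :=
        exists_meet (nodup_labels_of_cons hnd) hxt hyt hxy hdxy.1 hdyx.1
      have hmt := (descIn_mem hmx).1
      exact Or.inl ⟨m, by simp [descInL, hmx], by simp [descInL, hmy],
        by simpa [cardL, hmt, hxt, hyt] using hne⟩
    · exact Or.inr (by simp [idxOf, hxt, hyt])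
    · exact Or.inr (by simp [idxOf, hxt, hyt])
    · simp only [memL, hxt, hyt, Bool.false_or] at hx hy
      rcases exists_meetL (nodup_labelsL_of_cons hnd) hx hy hxy hdxy.2 hdyx.2 with
        ⟨m, hmx, hmy, hne⟩ | hne
      · have hmt := mem_eq_false_of_memL hnd (descInL_mem hmx).1
        exact Or.inl ⟨m, by simp [descInL, hmx], by simp [descInL, hmy],
          by simpa [cardL, hmt, hxt, hyt] using hne⟩
      · exact Or.inr (by simpa [idxOf, hxt, hyt] using hne)
end

theorem cardL_eq_zero_and_eq_of_idxOf_lt {x y : ℕ} : ∀ {cs : List STree}, memL y cs = true →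
    idxOf x cs < idxOf y cs → cardL s y x cs = 0 ∧ cardL s x y cs = s x
  | [], hy, _ => by simp [memL] at hy
  | t :: ts, hy, hlt => by
    have hyt : mem y t = false := by
      rw [← Bool.not_eq_true]
      intro h
      simp [idxOf, h] at hlt
    simp only [memL, hyt, Bool.false_or] at hy
    by_cases hxt : mem x t = true
    · simp [cardL, hxt, hyt, hy]
    · simp only [idxOf, hxt, hyt, Bool.false_eq_true, if_false] at hlt
      simpa [cardL, hxt, hyt] using cardL_eq_zero_and_eq_of_idxOf_lt hy (by omega)

mutual
theorem card_eq_zero_and_eq_of_card_lt {m x y : ℕ} : ∀ {t : STree}, (labels t).Nodup →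
    descIn m x t = true → descIn m y t = true → card s m x t < card s m y t →
    card s y x t = 0 ∧ card s x y t = s x
  | .leaf, _, h, _, _ => by simp [descIn] at h
  | .node b cs, hnd, hx, hy, hlt => by
    have hbcs := memL_eq_false_of_nodup_node hnd
    simp only [descIn, Bool.or_eq_true, Bool.and_eq_true, beq_iff_eq] at hx hy
    have hxcs : memL x cs = true := by
      rcases hx with ⟨-, hx⟩ | hx
      · exact hx
      · exact (descInL_mem hx).2
    have hycs : memL y cs = true := by
      rcases hy with ⟨-, hy⟩ | hy
      · exact hy
      · exact (descInL_mem hy).2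
    have hbx : b ≠ x := by rintro rfl; simp [hxcs] at hbcs
    have hby : b ≠ y := by rintro rfl; simp [hycs] at hbcs
    simp only [card, if_neg hbx, if_neg hby]
    rcases hx with ⟨rfl, -⟩ | hx <;> rcases hy with ⟨hbm, -⟩ | hy
    · simp only [card, if_true] at hlt
      exact cardL_eq_zero_and_eq_of_idxOf_lt hycs hlt
    · simp [(descInL_mem hy).1] at hbcs
    · subst hbm
      simp [(descInL_mem hx).1] at hbcs
    · have hbm : b ≠ m := by rintro rfl; simp [(descInL_mem hx).1] at hbcs
      simp only [card, if_neg hbm] at hlt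
      exact cardL_eq_zero_and_eq_of_cardL_lt (List.nodup_cons.1 hnd).2 hx hy hlt
theorem cardL_eq_zero_and_eq_of_cardL_lt {m x y : ℕ} : ∀ {cs : List STree},
    (labelsL cs).Nodup → descInL m x cs = true → descInL m y cs = true →
    cardL s m x cs < cardL s m y cs → cardL s y x cs = 0 ∧ cardL s x y cs = s x
  | [], _, h, _, _ => by simp [descInL] at h
  | t :: ts, hnd, hx, hy, hlt => by
    simp only [descInL, Bool.or_eq_true] at hx hy
    rcases hx with hx | hx <;> rcases hy with hy | hy
    · obtain ⟨hmt, hxt⟩ := descIn_mem hx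
      have hyt := (descIn_mem hy).2
      simp only [cardL, hmt, hxt, hyt, if_true] at hlt ⊢
      exact card_eq_zero_and_eq_of_card_lt (nodup_labels_of_cons hnd) hx hy hlt
    · exact absurd (descInL_mem hy).1 (by simp [memL_eq_false_of_mem hnd (descIn_mem hx).1])
    · exact absurd (descInL_mem hx).1 (by simp [memL_eq_false_of_mem hnd (descIn_mem hy).1])
    · obtain ⟨hmts, hxts⟩ := descInL_mem hx
      have hyts := (descInL_mem hy).2
      simp only [cardL, mem_eq_false_of_memL hnd hmts, mem_eq_false_of_memL hnd hxts,
        mem_eq_false_of_memL hnd hyts, Bool.false_eq_true, if_false] at hlt ⊢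
      exact cardL_eq_zero_and_eq_of_cardL_lt (nodup_labelsL_of_cons hnd) hx hy hlt
end

theorem card_lt_card_of_meet (hnd : (labels T).Nodup) (hw : wf s T)
    {a c m x : ℕ} (hca : descIn c a T = true) (hlt : card s c a T < s c)
    (hchain : ∀ b, a < b → b < c → descIn b a T = true → card s b a T = s b)
    (hma : descIn m a T = true) (hmx : descIn m x T = true)
    (hcard : card s m a T < card s m x T) : card s c a T < card s c x T := by
  rcases descIn_comparable hnd hma hca with rfl | hmc | hcm
  · exact hcard
  · have hcm : c < m := lt_of_descIn hw hmc
    rw [card_eq_card_of_descIn hnd hw hca hcm] at hcard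
    rwa [(card_eq_zero_and_eq_of_card_lt hnd hmc hmx hcard).2]
  · have := hchain m (lt_of_descIn hw hma) (lt_of_descIn hw hcm) hma
    have := (card_le_and_inRight_iff hnd hw hmx).1
    omega

theorem descIn_eq_false_of_lt (hw : wf s T) {x y : ℕ} (hxy : x < y) :
    descIn x y T = false := by
  rw [← Bool.not_eq_true]
  exact fun h => absurd (lt_of_descIn hw h) (by omega)

theorem card_eq_of_card_eq_card (hnd : (labels T).Nodup) (hw : wf s T) {a b c : ℕ}
    (hca : descIn c a T = true) (hlt : card s c a T < s c)
    (hchain : ∀ b, a < b → b < c → descIn b a T = true → card s b a T = s b)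
    (hab : a < b) (hbc : b < c) (ha : mem a T = true) (hb : mem b T = true)
    (heq : card s c b T = card s c a T) : card s b a T = s b := by
  by_cases hba : descIn b a T = true
  · exact hchain b hab hbc hba
  obtain ⟨m, hma, hmb, hne⟩ :=
    exists_meet hnd ha hb hab.ne (descIn_eq_false_of_lt hw hab) (by simpa using hba)
  rcases hne.lt_or_gt with hab' | hba'
  · exact absurd heq (card_lt_card_of_meet hnd hw hca hlt hchain hma hmb hab').ne'
  · exact (card_eq_zero_and_eq_of_card_lt hnd hmb hma hba').2

theorem card_lt_card_of_card_eq (hnd : (labels T).Nodup) (hw : wf s T) {a a' c : ℕ}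
    (hca : descIn c a T = true) (hlt : card s c a T < s c)
    (hchain : ∀ b, a < b → b < c → descIn b a T = true → card s b a T = s b)
    (hre : rightEmpty a T = true) (hsa : 0 < s a) (ha'a : a' < a)
    (ha : mem a T = true) (ha' : mem a' T = true)
    (heq : card s a a' T = s a) : card s c a T < card s c a' T := by
  have haa' : descIn a a' T = false := by
    rw [← Bool.not_eq_true]
    intro h
    have := (card_le_and_inRight_iff hnd hw h).2.2 heq
    rw [inRight_eq_false_of_rightEmpty hnd hre] at this
    exact Bool.false_ne_true this
  obtain ⟨m, hma, hma', hne⟩ :=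
    exists_meet hnd ha ha' ha'a.ne' haa' (descIn_eq_false_of_lt hw ha'a)
  rcases hne.lt_or_gt with haa'' | ha'a''
  · exact card_lt_card_of_meet hnd hw hca hlt hchain hma hma' haa''
  · have := (card_eq_zero_and_eq_of_card_lt hnd hma' hma ha'a'').1
    omega

theorem isTreeAscent_iff_card (hnd : (labels T).Nodup) (hw : wf s T) {a c : ℕ}
    (hac : a < c) (ha : mem a T = true) (hc : mem c T = true) :
    IsTreeAscent s T a c ↔
      (∀ d, c < d → card s d c T = card s d a T) ∧ card s c a T < s c ∧
      (∀ b, a < b → b < c → mem b T = true →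
        card s c b T = card s c a T → card s b a T = s b) ∧
      (0 < s a → ∀ a', a' < a → mem a' T = true →
        card s a a' T = s a → card s c a T < card s c a' T) := by
  constructor
  · rintro ⟨-, hca, hnr, hchain, hre⟩
    have hchain' b hab hbc hba := (card_le_and_inRight_iff hnd hw hba).2.1 (hchain b hab hbc hba)
    have hlt : card s c a T < s c := by
      refine lt_of_le_of_ne (card_le_and_inRight_iff hnd hw hca).1 fun h => ?_
      simp [(card_le_and_inRight_iff hnd hw hca).2.2 h] at hnr
    exact ⟨fun d hd => (card_eq_card_of_descIn hnd hw hca hd).symm, hlt,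
      fun b hab hbc => card_eq_of_card_eq_card hnd hw hca hlt hchain' hab hbc ha,
      fun hsa a' ha'a => card_lt_card_of_card_eq hnd hw hca hlt hchain' (hre hsa) hsa ha'a ha⟩
  · rintro ⟨hinv, hlt, hright, hleft⟩
    have hca : descIn c a T = true := by
      by_contra hca
      obtain ⟨m, hma, hmc, hne⟩ :=
        exists_meet hnd ha hc hac.ne (descIn_eq_false_of_lt hw hac) (by simpa using hca)
      exact hne (hinv m (lt_of_descIn hw hmc)).symm
    refine ⟨hac, hca, ?_, fun b hab hbc hba => ?_, fun hsa => ?_⟩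
    · rw [← Bool.not_eq_true, (card_le_and_inRight_iff hnd hw hca).2]
      exact hlt.ne
    · refine (card_le_and_inRight_iff hnd hw hba).2.2 (hright b hab hbc (descIn_mem hba).1 ?_)
      exact (card_eq_card_of_descIn hnd hw hba hbc).symm
    · by_contra hre
      obtain ⟨a', hd, hr⟩ := exists_inRight_of_rightEmpty_eq_false hw ha (by simpa using hre)
      have := hleft hsa a' (lt_of_descIn hw hd) (descIn_mem hd).2
        ((card_le_and_inRight_iff hnd hw hd).2.1 hr)
      rw [card_eq_card_of_descIn hnd hw hd hac] at this
      exact lt_irrefl _ this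

theorem IsSDecreasingTree.nodup (hT : IsSDecreasingTree n s T) : (labels T).Nodup :=
  hT.2.nodup_iff.2 List.nodup_range'

theorem IsSDecreasingTree.mem_iff (hT : IsSDecreasingTree n s T) {x : ℕ} :
    mem x T = true ↔ 1 ≤ x ∧ x ≤ n := by
  rw [mem_iff_mem_labels, hT.2.mem_iff, List.mem_range'_1]
  omega

theorem IsSDecreasingTree.treeInv_eq_card (hT : IsSDecreasingTree n s T) {y x : ℕ}
    (hx : 1 ≤ x) (hxy : x < y) : treeInv n s T y x = card s y x T := by
  unfold treeInv
  split_ifs with h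
  · rfl
  · refine (card_eq_zero_of_mem_eq_false ?_).symm
    rw [← Bool.not_eq_true, hT.mem_iff]
    omega

end STree

open STree in
/-- Characterization of tree-ascents in terms of tree-inversions:
`(a,c)` is a tree-ascent of `T` iff (i) `card(d,c) = card(d,a)` for all
`d > c`; (ii) `card(c,a) < s c`; (iii) for `a < b < c`, `card(c,b) = card(c,a)`
implies `card(b,a) = s b`; (iv) if `s a > 0`, for all `a' < a`,
`card(a,a') = s a` implies `card(c,a') > card(c,a)`. -/
theorem treeAscent_iff_inversions (n : ℕ) (s : ℕ → ℕ) (T : STree)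
    (hT : IsSDecreasingTree n s T) (a c : ℕ)
    (ha : 1 ≤ a) (hac : a < c) (hc : c ≤ n) :
    IsTreeAscent s T a c ↔
      ((∀ d : ℕ, c < d → treeInv n s T d c = treeInv n s T d a) ∧
       treeInv n s T c a < s c ∧
       (∀ b : ℕ, a < b → b < c →
         treeInv n s T c b = treeInv n s T c a → treeInv n s T b a = s b) ∧
       (0 < s a → ∀ a' : ℕ, a' < a →
         treeInv n s T a a' = s a → treeInv n s T c a < treeInv n s T c a')) := by
  rw [isTreeAscent_iff_card hT.nodup hT.1 hac (hT.mem_iff.2 ⟨ha, by omega⟩)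
    (hT.mem_iff.2 ⟨by omega, hc⟩)]
  refine and_congr (forall₂_congr fun d hd => ?_) (and_congr ?_ (and_congr
    (forall_congr' fun b => forall₂_congr fun hab hbc => ?_)
    (imp_congr_right fun hsa => forall₂_congr fun a' ha'a => ?_)))
  · rw [hT.treeInv_eq_card (by omega) hd, hT.treeInv_eq_card ha (hac.trans hd)]
  · rw [hT.treeInv_eq_card ha hac]
  · have hb : mem b T = true := hT.mem_iff.2 ⟨by omega, by omega⟩
    rw [hT.treeInv_eq_card (by omega) hbc, hT.treeInv_eq_card ha hac,
      hT.treeInv_eq_card ha hab]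
    exact ⟨fun h => h hb, fun h _ => h⟩
  · rcases Nat.eq_zero_or_pos a' with rfl | ha'
    · have h0 : mem 0 T = false := by
        rw [← Bool.not_eq_true, hT.mem_iff]
        omega
      simp [h0, treeInv, hsa.ne]
    · have ha'T : mem a' T = true := hT.mem_iff.2 ⟨ha', by omega⟩
      rw [hT.treeInv_eq_card ha' ha'a, hT.treeInv_eq_card ha hac,
        hT.treeInv_eq_card ha' (ha'a.trans hac)]
      exact ⟨fun h => h ha'T, fun h _ => h⟩
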